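/- The indispensable monomials of I_A are precisely the elements of the minimal monomial generating set T_A of the monomial ideal M_A generated by all monomials x^u for which there exists v ≠ u with x^u - x^v ∈ I_A. -/

import Mathlib

open MvPolynomial

noncomputable section

/-- The `A`-degree of a monomial exponent vector `u`. -/
def degA {m n : ℕ} (A : Fin m → Fin n → ℤ) (u : Fin m →₀ ℕ) : Fin n → ℤ :=
  ∑ i, (u i : ℤ) • A i

/-- The affine semigroup `ℕA` is pointed. -/
def IsPointed {m n : ℕ} (A : Fin m → Fin n → ℤ) : Prop :=
  ∀ u v : Fin m →₀ ℕ, degA A u + degA A v = 0 → degA A u = 0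

/-- The toric ideal `I_A`. -/
def toricIdeal (K : Type*) [Field K] {m n : ℕ} (A : Fin m → Fin n → ℤ) :
    Ideal (MvPolynomial (Fin m) K) :=
  Ideal.span {f | ∃ u v : Fin m →₀ ℕ, degA A u = degA A v ∧
    f = monomial u (1 : K) - monomial v 1}

/-- `b` belongs to the affine semigroup `ℕA`. -/
def inNA {m n : ℕ} (A : Fin m → Fin n → ℤ) (b : Fin n → ℤ) : Prop :=
  ∃ u : Fin m →₀ ℕ, degA A u = b

/-- `c` is strictly smaller than `b` in the natural partial order on `ℕA`. -/
def ltA {m n : ℕ} (A : Fin m → Fin n → ℤ) (c b : Fin n → ℤ) : Prop :=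
  (∃ e, inNA A e ∧ b = c + e) ∧ c ≠ b

/-- The ideal `I_{A,b}` generated by binomials of `A`-degree strictly less than `b`. -/
def subIdeal (K : Type*) [Field K] {m n : ℕ} (A : Fin m → Fin n → ℤ) (b : Fin n → ℤ) :
    Ideal (MvPolynomial (Fin m) K) :=
  Ideal.span {f | ∃ u v : Fin m →₀ ℕ, degA A u = degA A v ∧ ltA A (degA A u) b ∧
    f = monomial u (1 : K) - monomial v 1}

/-- The graph `G(b)` on the fiber `deg_A^{-1}(b)`. -/
def fiberGraph (K : Type*) [Field K] {m n : ℕ} (A : Fin m → Fin n → ℤ) (b : Fin n → ℤ) :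
    SimpleGraph {u : Fin m →₀ ℕ // degA A u = b} where
  Adj x y := x ≠ y ∧ monomial x.1 (1 : K) - monomial y.1 1 ∈ subIdeal K A b
  symm := by
    constructor
    rintro x y ⟨hne, hmem⟩
    exact ⟨hne.symm, by simpa [neg_sub] using neg_mem hmem⟩
  loopless := ⟨fun x h => h.1 rfl⟩

/-- A set of binomials of `I_A`. -/
def IsBinomialSet (K : Type*) [Field K] {m n : ℕ} (A : Fin m → Fin n → ℤ)
    (S : Set (MvPolynomial (Fin m) K)) : Prop :=
  ∀ f ∈ S, ∃ u v : Fin m →₀ ℕ, degA A u = degA A v ∧ f = monomial u (1 : K) - monomial v 1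

/-- A minimal system of binomial generators of `I_A`. -/
def IsMinimalGenSet (K : Type*) [Field K] {m n : ℕ} (A : Fin m → Fin n → ℤ)
    (S : Set (MvPolynomial (Fin m) K)) : Prop :=
  IsBinomialSet K A S ∧ Ideal.span S = toricIdeal K A ∧
    ∀ T : Set (MvPolynomial (Fin m) K), T ⊂ S → Ideal.span T ≠ toricIdeal K A

/-- `b` is a Betti `A`-degree. -/
def IsBettiDegree (K : Type*) [Field K] {m n : ℕ} (A : Fin m → Fin n → ℤ)
    (b : Fin n → ℤ) : Prop :=
  ∃ S, IsMinimalGenSet K A S ∧ ∃ u v : Fin m →₀ ℕ, degA A u = b ∧ degA A v = b ∧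
    monomial u (1 : K) - monomial v 1 ∈ S

/-- `b` is the `A`-degree of a nonzero binomial of `I_A`. -/
def IsBinomialDegree {m n : ℕ} (A : Fin m → Fin n → ℤ) (b : Fin n → ℤ) : Prop :=
  ∃ u v : Fin m →₀ ℕ, u ≠ v ∧ degA A u = b ∧ degA A v = b

/-- `b` is a minimal binomial `A`-degree. -/
def IsMinimalBinomialDegree {m n : ℕ} (A : Fin m → Fin n → ℤ) (b : Fin n → ℤ) : Prop :=
  IsBinomialDegree A b ∧ ∀ c, IsBinomialDegree A c → ¬ ltA A c b

/-- An indispensable binomial of `I_A`: it belongs, up to sign, to every binomial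
generating set of `I_A`. -/
def IsIndispensableBinomial (K : Type*) [Field K] {m n : ℕ} (A : Fin m → Fin n → ℤ)
    (f : MvPolynomial (Fin m) K) : Prop :=
  f ∈ toricIdeal K A ∧
    ∀ S, IsBinomialSet K A S → Ideal.span S = toricIdeal K A → f ∈ S ∨ -f ∈ S

/-- The number of minimal systems of binomial generators of `I_A`, where the
sign of a binomial does not count (a system is recorded as the set of its
sign-pairs `{f, -f}`). -/
def nuIA (K : Type*) [Field K] {m n : ℕ} (A : Fin m → Fin n → ℤ) : ℕ :=
  Set.ncard {U : Set (Set (MvPolynomial (Fin m) K)) |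
    ∃ S, IsMinimalGenSet K A S ∧ U = (fun f => ({f, -f} : Set (MvPolynomial (Fin m) K))) '' S}

/-- The number of elements of `A`-degree `b` in the generating set `S`. -/
def betti0 (K : Type*) [Field K] {m n : ℕ} (A : Fin m → Fin n → ℤ)
    (S : Set (MvPolynomial (Fin m) K)) (b : Fin n → ℤ) : ℕ :=
  Set.ncard {f ∈ S | ∃ u v : Fin m →₀ ℕ, degA A u = b ∧ degA A v = b ∧
    f = monomial u (1 : K) - monomial v 1}

/-- The set of exponents of monomials of the monomial ideal `M_A`. -/
def MAset {m n : ℕ} (A : Fin m → Fin n → ℤ) : Set (Fin m →₀ ℕ) :=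
  {u | ∃ v : Fin m →₀ ℕ, v ≠ u ∧ degA A v = degA A u}

/-- The minimal monomial generating set `T_A` of `M_A` (monomials of `M_A`
minimal under divisibility). -/
def TA {m n : ℕ} (A : Fin m → Fin n → ℤ) : Set (Fin m →₀ ℕ) :=
  {u ∈ MAset A | ∀ w ∈ MAset A, (∀ i, w i ≤ u i) → w = u}

/-- A monomial is indispensable if every binomial generating set of `I_A`
contains a binomial of which it is a monomial. -/
def IsIndispensableMonomial (K : Type*) [Field K] {m n : ℕ} (A : Fin m → Fin n → ℤ)
    (u : Fin m →₀ ℕ) : Prop :=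
  ∀ S, IsBinomialSet K A S → Ideal.span S = toricIdeal K A →
    ∃ f ∈ S, ∃ v : Fin m →₀ ℕ,
      f = monomial u (1 : K) - monomial v 1 ∨ f = monomial v (1 : K) - monomial u 1

/-! A monomial of an element of `Ideal.span S` is divisible by a monomial of some element of `S`.
Hence if `x^u` is minimal in `M_A`, any binomial generating set must produce the monomial `x^u` of
a binomial `x^u - x^v ∈ I_A` through a generator with a monomial dividing, hence equal to, `x^u`.
Conversely, if `x^u` lies in no nonzero binomial of `I_A`, or some proper divisor `x^w` of `x^u`
lies in `M_A`, then the binomials of `I_A` not involving `x^u` already generate `I_A`. -/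

section Binomials
variable {σ R : Type*} [CommRing R]

lemma eq_or_eq_of_coeff_monomial_sub_monomial_ne_zero {a b t : σ →₀ ℕ}
    (h : coeff t (monomial a (1 : R) - monomial b 1) ≠ 0) : t = a ∨ t = b := by
  classical
  by_contra! hne
  simp [coeff_monomial, Ne.symm hne.1, Ne.symm hne.2] at h

lemma coeff_monomial_sub_monomial_self [Nontrivial R] {a b : σ →₀ ℕ} (hab : a ≠ b) :
    coeff a (monomial a (1 : R) - monomial b 1) = 1 := by
  classical
  simp [coeff_monomial, Ne.symm hab]

lemma exists_mem_support_le_of_mem_span {S : Set (MvPolynomial σ R)} {f : MvPolynomial σ R}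
    (hf : f ∈ Ideal.span S) {t : σ →₀ ℕ} (ht : coeff t f ≠ 0) :
    ∃ g ∈ S, ∃ s ∈ g.support, s ≤ t := by
  induction hf using Submodule.span_induction generalizing t with
  | mem g hg => exact ⟨g, hg, t, mem_support_iff.2 ht, le_rfl⟩
  | zero => exact absurd (coeff_zero t) ht
  | add x y _ _ ihx ihy =>
    rw [coeff_add] at ht
    by_cases hx : coeff t x = 0
    · exact ihy (by simpa [hx] using ht)
    · exact ihx hx
  | smul r x _ ih =>
    classical
    rw [smul_eq_mul, coeff_mul] at ht
    obtain ⟨⟨p, q⟩, hpq, hne⟩ := Finset.exists_ne_zero_of_sum_ne_zero ht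
    rw [Finset.HasAntidiagonal.mem_antidiagonal] at hpq
    obtain ⟨g, hg, s, hs, hsq⟩ := ih (right_ne_zero_of_mul hne)
    exact ⟨g, hg, s, hs, hsq.trans (hpq ▸ le_add_self)⟩

end Binomials

section Toric
variable {K : Type*} [Field K] {m n : ℕ} {A : Fin m → Fin n → ℤ}

lemma degA_add (u v : Fin m →₀ ℕ) : degA A (u + v) = degA A u + degA A v := by
  simp only [degA, Finsupp.add_apply, Nat.cast_add, add_smul, Finset.sum_add_distrib]

variable (K A) in
def toricBinomials : Set (MvPolynomial (Fin m) K) :=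
  {f | ∃ a b : Fin m →₀ ℕ, degA A a = degA A b ∧ f = monomial a (1 : K) - monomial b 1}

variable (K A) in
lemma span_toricBinomials : Ideal.span (toricBinomials K A) = toricIdeal K A := rfl

lemma mem_MAset_of_coeff_ne_zero {f : MvPolynomial (Fin m) K} (hf : f ∈ toricBinomials K A)
    {u : Fin m →₀ ℕ} (hu : coeff u f ≠ 0) : u ∈ MAset A := by
  obtain ⟨a, b, hab, rfl⟩ := hf
  have hne : a ≠ b := by rintro rfl; simp at hu
  rcases eq_or_eq_of_coeff_monomial_sub_monomial_ne_zero hu with rfl | rfl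
  · exact ⟨b, hne.symm, hab.symm⟩
  · exact ⟨a, hne, hab⟩

lemma IsIndispensableMonomial.exists_coeff_ne_zero {u : Fin m →₀ ℕ}
    (hu : IsIndispensableMonomial K A u) {S : Set (MvPolynomial (Fin m) K)}
    (hS : S ⊆ toricBinomials K A) (hS0 : 0 ∉ S) (hspan : Ideal.span S = toricIdeal K A) :
    ∃ f ∈ S, coeff u f ≠ 0 := by
  obtain ⟨f, hfS, v, hf⟩ := hu S hS hspan
  have huv : u ≠ v := by
    rintro rfl
    simp only [sub_self, or_self] at hf
    exact hS0 (hf ▸ hfS)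
  refine ⟨f, hfS, ?_⟩
  rcases hf with rfl | rfl
  · simp [coeff_monomial_sub_monomial_self huv]
  · simp [coeff_monomial, huv.symm]

/-- If the only partner of `w` in its fibre is `u`, then `deg_A (u - w) = 0` and `u + (u - w)` is a
third point of the fibre. -/
lemma exists_ne_degA_eq_of_mem_MAset {u w : Fin m →₀ ℕ} (hw : w ∈ MAset A) (hwu : w ≤ u)
    (hne : w ≠ u) : ∃ w', w' ≠ w ∧ w' ≠ u ∧ degA A w' = degA A w := by
  obtain ⟨w', hw'w, hdeg⟩ := hw
  by_cases hw'u : w' = u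
  · rw [hw'u] at hdeg
    have hdeg0 : degA A (u - w) = 0 := by
      have := congrArg (degA A) (tsub_add_cancel_of_le hwu)
      rw [degA_add, hdeg] at this
      exact add_eq_right.1 this
    refine ⟨u + (u - w), fun h => hne ?_, fun h => hne ?_, by rw [degA_add, hdeg0, add_zero, hdeg]⟩
    · exact hwu.antisymm (h ▸ le_self_add)
    · exact hwu.antisymm (tsub_eq_zero_iff_le.1 (add_eq_left.1 h))
  · exact ⟨w', hw'w, hw'u, hdeg⟩

/-- `x^u - x^b = x^(u-w) (x^w - x^w') + (x^(u-w+w') - x^b)`, and neither binomial on the right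
involves `x^u`. -/
lemma span_toricBinomials_coeff_eq_zero {u w : Fin m →₀ ℕ} (hw : w ∈ MAset A) (hwu : w ≤ u)
    (hne : w ≠ u) : Ideal.span {f ∈ toricBinomials K A | coeff u f = 0} = toricIdeal K A := by
  set D := {f ∈ toricBinomials K A | coeff u f = 0}
  have mem_D : ∀ a b, degA A a = degA A b → a ≠ u → b ≠ u →
      monomial a (1 : K) - monomial b 1 ∈ Ideal.span D := fun a b hab hau hbu =>
    Ideal.subset_span ⟨⟨a, b, hab, rfl⟩, by simp [coeff_monomial, hau, hbu]⟩
  obtain ⟨w', hw'w, hw'u, hdeg⟩ := exists_ne_degA_eq_of_mem_MAset hw hwu hne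
  have hcancel : u - w + w = u := tsub_add_cancel_of_le hwu
  have key : ∀ b, degA A b = degA A u → b ≠ u →
      monomial u (1 : K) - monomial b 1 ∈ Ideal.span D := by
    intro b hb hbu
    have hid : monomial u (1 : K) - monomial b 1 =
        monomial (u - w) 1 * (monomial w 1 - monomial w' 1) +
          (monomial (u - w + w') 1 - monomial b 1) := by
      rw [mul_sub, monomial_mul, monomial_mul, one_mul, hcancel]
      ring
    rw [hid]
    refine add_mem (Ideal.mul_mem_left _ _ (mem_D w w' hdeg.symm hne hw'u)) (mem_D _ b ?_ ?_ hbu)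
    · rw [degA_add, hdeg, ← degA_add, hcancel, hb]
    · exact fun h => hw'w (add_left_cancel (h.trans hcancel.symm))
  refine le_antisymm (Ideal.span_mono fun f hf => hf.1) (Ideal.span_le.2 ?_)
  rintro f ⟨a, b, hab, rfl⟩
  by_cases hau : a = u <;> by_cases hbu : b = u
  · simp [hau, hbu]
  · subst hau; exact key b hab.symm hbu
  · subst hbu
    rw [← neg_sub]
    exact neg_mem (key a hab hau)
  · exact mem_D a b hab hau hbu

end Toric

theorem statement16_general {K : Type*} [Field K] {m n : ℕ} (A : Fin m → Fin n → ℤ)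
    (u : Fin m →₀ ℕ) :
    IsIndispensableMonomial K A u ↔ u ∈ TA A := by
  constructor
  · intro hind
    have exists_coeff {S} (hS : S ⊆ toricBinomials K A) (hspan : Ideal.span S = toricIdeal K A) :
        ∃ f ∈ S \ {0}, coeff u f ≠ 0 :=
      hind.exists_coeff_ne_zero (Set.sdiff_subset.trans hS) (fun h => h.2 rfl)
        (Ideal.span_sdiff_singleton_zero.trans hspan)
    obtain ⟨f, ⟨hf, -⟩, hfu⟩ := exists_coeff subset_rfl (span_toricBinomials K A)
    refine ⟨mem_MAset_of_coeff_ne_zero hf hfu, fun w hw hwu => by_contra fun hne => ?_⟩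
    obtain ⟨g, ⟨⟨-, hg_zero⟩, -⟩, hg_ne_zero⟩ := exists_coeff (fun g hg => hg.1)
      (span_toricBinomials_coeff_eq_zero hw (Finsupp.le_def.2 hwu) hne)
    exact hg_ne_zero hg_zero
  · rintro ⟨⟨v, hvu, hdeg⟩, hmin⟩ S hS hspan
    have hmem : monomial u (1 : K) - monomial v 1 ∈ Ideal.span S :=
      hspan ▸ Ideal.subset_span ⟨u, v, hdeg.symm, rfl⟩
    obtain ⟨g, hgS, s, hs, hs_le⟩ := exists_mem_support_le_of_mem_span hmem
      (by rw [coeff_monomial_sub_monomial_self hvu.symm]; exact one_ne_zero)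
    have hsu : s = u := hmin s (mem_MAset_of_coeff_ne_zero (hS g hgS) (mem_support_iff.1 hs))
      (Finsupp.le_def.1 hs_le)
    obtain ⟨a, b, -, rfl⟩ := hS g hgS
    rcases eq_or_eq_of_coeff_monomial_sub_monomial_ne_zero (mem_support_iff.1 hs) with rfl | rfl
    · exact ⟨_, hgS, b, .inl (by rw [hsu])⟩
    · exact ⟨_, hgS, a, .inr (by rw [hsu])⟩

/-- The indispensable monomials of `I_A` are precisely the minimal monomial
generators of `M_A`. -/
theorem statement16 {K : Type*} [Field K] {m n : ℕ} (A : Fin m → Fin n → ℤ)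
    (hA : IsPointed A) (u : Fin m →₀ ℕ) :
    IsIndispensableMonomial K A u ↔ u ∈ TA A :=
  statement16_general A u
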